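/- arXiv:1901.01160 — 4 statements merged into one kernel-verified Lean document; each statement's English description precedes it below -/
import Mathlib

section
/- Let I be an ideal on a set Z of subsets of X and let 𝒜 be a family of I-positive subsets of Z whose pairwise intersections lie in I (an antichain of representatives). If either (a) I is κ-complete and |𝒜| ≤ κ, or (b) I is normal and fine and |𝒜| ≤ |X|, then there is a family ⟨B_A : A ∈ 𝒜⟩ of pairwise disjoint subsets of Z such that the symmetric difference A Δ B_A is in I for every A ∈ 𝒜. -/
/-!
Each `A ∈ 𝒜` is shrunk to `B_A ⊆ A` by deleting points it shares with other members, arranged so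
that of two members sharing a point at least one gives it up. The `B_A` are then disjoint, and
`A \ B_A` is covered by intersections `A ∩ A' ∈ I`; the point is to keep that union small.

(a) Enumerate `𝒜` in the initial ordinal of `|𝒜|` and let `A` give up what it shares with its
predecessors: fewer than `κ` intersections, so `κ`-completeness applies.

(b) Tag each `A` with a distinct point `x_A ∈ X`, and keep `z ∈ A` iff `x_A ∈ z` and `z` lies in no
other `A'` with `x_{A'} ∈ z`. A deleted `z` either misses `x_A`, which fineness makes small, or lies
in `A ∩ A'` with `x_{A'} ∈ z`, a diagonal union, which normality makes small.
-/

open Cardinal Set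

universe u

/-- `I` is a (nonprincipal, proper) ideal on the set `Z` of subsets of `X`. -/
def IsSetIdeal {X : Type u} (Z : Set (Set X)) (I : Set (Set (Set X))) : Prop :=
  (∀ A ∈ I, A ⊆ Z) ∧
  (∀ A ∈ I, ∀ B : Set (Set X), B ⊆ A → B ∈ I) ∧
  (∀ A ∈ I, ∀ B ∈ I, A ∪ B ∈ I) ∧
  (∀ z ∈ Z, ({z} : Set (Set X)) ∈ I) ∧
  Z ∉ I

/-- `I` is fine. -/
def IsFineSetIdeal {X : Type u} (Z : Set (Set X)) (I : Set (Set (Set X))) : Prop :=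
  ∀ x : X, {z | z ∈ Z ∧ x ∉ z} ∈ I

/-- `I` is normal. -/
def IsNormalSetIdeal {X : Type u} (Z : Set (Set X)) (I : Set (Set (Set X))) : Prop :=
  ∀ A : X → Set (Set X), (∀ x, A x ∈ I) →
    {z | z ∈ Z ∧ ∃ x, x ∈ z ∧ z ∈ A x} ∈ I

/-- `I` is `κ`-complete: closed under unions of fewer than `κ` of its members. -/
def IsCompleteSetIdeal {X : Type u} (κ : Cardinal.{u}) (I : Set (Set (Set X))) : Prop :=
  ∀ 𝒜 : Set (Set (Set X)), #𝒜 < κ → 𝒜 ⊆ I → ⋃₀ 𝒜 ∈ I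

structure IsDisjointShrinking {α ι : Type*} (I : Set (Set α)) (f D : ι → Set α) : Prop where
  subset : ∀ i, D i ⊆ f i
  diff_mem : ∀ i, f i \ D i ∈ I
  pairwise_disjoint : Pairwise fun i j ↦ Disjoint (D i) (D j)

theorem IsDisjointShrinking.exists_disjoint_representatives {α : Type*} {I : Set (Set α)}
    {𝒜 : Set (Set α)} {D : 𝒜 → Set α} (hD : IsDisjointShrinking I (↑) D) :
    ∃ B : Set α → Set α,
      (∀ A ∈ 𝒜, B A ⊆ A) ∧
      (∀ A ∈ 𝒜, (A \ B A) ∪ (B A \ A) ∈ I) ∧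
      (∀ A ∈ 𝒜, ∀ A' ∈ 𝒜, A ≠ A' → B A ∩ B A' = ∅) := by
  set B : Set α → Set α := Function.extend (↑) D fun _ ↦ ∅
  have hB : ∀ A (hA : A ∈ 𝒜), B A = D ⟨A, hA⟩ :=
    fun A hA ↦ Subtype.val_injective.extend_apply D _ ⟨A, hA⟩
  refine ⟨B, fun A hA ↦ ?_, fun A hA ↦ ?_, fun A hA A' hA' hne ↦ ?_⟩
  · rw [hB A hA]
    exact hD.subset ⟨A, hA⟩
  · rw [hB A hA, sdiff_eq_empty.2 (hD.subset ⟨A, hA⟩), union_empty]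
    exact hD.diff_mem ⟨A, hA⟩
  · rw [hB A hA, hB A' hA', ← disjoint_iff_inter_eq_empty]
    exact hD.pairwise_disjoint fun h ↦ hne (congrArg Subtype.val h)

section

variable {X : Type u} {Z : Set (Set X)} {I : Set (Set (Set X))}

theorem IsSetIdeal.mono (hI : IsSetIdeal Z I) {A B : Set (Set X)} (hA : A ∈ I) (hBA : B ⊆ A) :
    B ∈ I :=
  hI.2.1 A hA B hBA

theorem IsSetIdeal.union_mem (hI : IsSetIdeal Z I) {A B : Set (Set X)} (hA : A ∈ I)
    (hB : B ∈ I) : A ∪ B ∈ I :=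
  hI.2.2.1 A hA B hB

theorem IsCompleteSetIdeal.iUnion_mem {κ : Cardinal.{u}} (hI : IsCompleteSetIdeal κ I)
    {ι : Type u} (hι : #ι < κ) {f : ι → Set (Set X)} (hf : ∀ i, f i ∈ I) : ⋃ i, f i ∈ I := by
  rw [← sUnion_range]
  exact hI _ (mk_range_le.trans_lt hι) (range_subset_iff.2 hf)

theorem IsCompleteSetIdeal.exists_isDisjointShrinking_of_rank {κ : Cardinal.{u}}
    (hI : IsCompleteSetIdeal κ I) {ι ι' : Type u} [LinearOrder ι'] {f : ι → Set (Set X)}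
    (hf : Pairwise fun i j ↦ f i ∩ f j ∈ I) {ρ : ι → ι'} (hρ : Function.Injective ρ)
    (hρκ : ∀ k : ι', #(Iio k) < κ) :
    ∃ D, IsDisjointShrinking I f D := by
  refine ⟨fun i ↦ f i \ ⋃ (j : {j // ρ j < ρ i}), f j, fun i ↦ sdiff_subset, fun i ↦ ?_,
    fun i j hij ↦ ?_⟩
  · have hcard : #{j // ρ j < ρ i} < κ :=
      (mk_le_of_injective (f := fun j : {j // ρ j < ρ i} ↦ (⟨ρ j, j.2⟩ : Iio (ρ i)))
        fun j₁ j₂ h ↦ Subtype.ext (hρ (congrArg Subtype.val h))).trans_lt (hρκ (ρ i))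
    rw [sdiff_sdiff_right_self, inter_iUnion]
    exact IsCompleteSetIdeal.iUnion_mem hI hcard fun j ↦ hf fun h ↦ ne_of_gt j.2 (congrArg ρ h)
  · have hD : ∀ {i j}, ρ i < ρ j →
        Disjoint (f i \ ⋃ (k : {k // ρ k < ρ i}), f k) (f j \ ⋃ (k : {k // ρ k < ρ j}), f k) :=
      fun {i j} h ↦ disjoint_sdiff_right.mono_left
        (sdiff_subset.trans (subset_iUnion (fun k : {k // ρ k < ρ j} ↦ f k) ⟨i, h⟩))
    rcases (hρ.ne hij).lt_or_gt with h | h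
    · exact hD h
    · exact (hD h).symm

theorem IsCompleteSetIdeal.exists_isDisjointShrinking {κ : Cardinal.{u}}
    (hI : IsCompleteSetIdeal κ I) {ι : Type u} (hικ : #ι ≤ κ) {f : ι → Set (Set X)}
    (hf : Pairwise fun i j ↦ f i ∩ f j ∈ I) :
    ∃ D, IsDisjointShrinking I f D := by
  obtain ⟨e⟩ : Nonempty (ι ≃ (#ι).ord.ToType) := by rw [← Cardinal.eq, mk_toType, card_ord]
  exact IsCompleteSetIdeal.exists_isDisjointShrinking_of_rank hI hf e.injective
    fun k ↦ (by simpa using mk_Iio_lt k : #(Iio k) < #ι).trans_le hικ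

theorem IsNormalSetIdeal.exists_isDisjointShrinking (hI : IsSetIdeal Z I)
    (hnorm : IsNormalSetIdeal Z I) (hfine : IsFineSetIdeal Z I) {ι : Type*}
    {f : ι → Set (Set X)} (hfZ : ∀ i, f i ⊆ Z) (hf : Pairwise fun i j ↦ f i ∩ f j ∈ I)
    {g : ι → X} (hg : Function.Injective g) :
    ∃ D, IsDisjointShrinking I f D := by
  refine ⟨fun i ↦ {z ∈ f i | g i ∈ z ∧ ∀ j, j ≠ i → g j ∈ z → z ∉ f j},
    fun i z hz ↦ hz.1, fun i ↦ ?_, fun i j hij ↦ ?_⟩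
  · set C : X → Set (Set X) := fun x ↦ {z ∈ f i | ∃ j, j ≠ i ∧ g j = x ∧ z ∈ f j}
    have hC : ∀ x, C x ∈ I := by
      intro x
      by_cases hx : ∃ j, j ≠ i ∧ g j = x
      · obtain ⟨j, hji, rfl⟩ := hx
        refine hI.mono (hf hji.symm) fun z ⟨hzi, k, _, hkj, hzk⟩ ↦ ⟨hzi, ?_⟩
        rwa [← hg hkj]
      · exact hI.mono (hfine x) fun z ⟨_, j, hji, hjx, _⟩ ↦ (hx ⟨j, hji, hjx⟩).elim
    refine hI.mono (hI.union_mem (hfine (g i)) (hnorm C hC)) fun z ⟨hzi, hz⟩ ↦ ?_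
    by_cases hgz : g i ∈ z
    · simp only [mem_ofPred_eq, not_and, not_forall, not_not] at hz
      obtain ⟨j, hji, hgj, hzj⟩ := hz hzi hgz
      exact Or.inr ⟨hfZ i hzi, g j, hgj, hzi, j, hji, rfl, hzj⟩
    · exact Or.inl ⟨hfZ i hzi, hgz⟩
  · exact disjoint_left.2 fun z hzi hzj ↦ hzi.2.2 j hij.symm hzj.2.1 hzj.1

end

/-- If `𝒜` is an antichain of `I`-positive subsets of `Z` (pairwise intersections
in `I`), and either (a) `I` is `κ`-complete and `|𝒜| ≤ κ`, or (b) `I` is normal and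
fine and `|𝒜| ≤ |X|`, then `𝒜` has a system of pairwise disjoint representatives:
a family `⟨B_A : A ∈ 𝒜⟩` of pairwise disjoint subsets of `Z` with each symmetric
difference `A Δ B_A` in `I`. -/
theorem antichain_disjoint_representatives {X : Type u} (κ : Cardinal.{u})
    (Z : Set (Set X)) (I : Set (Set (Set X))) (hideal : IsSetIdeal Z I)
    (𝒜 : Set (Set (Set X)))
    (hpos : ∀ A ∈ 𝒜, A ⊆ Z ∧ A ∉ I)
    (hanti : ∀ A ∈ 𝒜, ∀ B ∈ 𝒜, A ≠ B → A ∩ B ∈ I)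
    (hcase : (IsCompleteSetIdeal κ I ∧ #𝒜 ≤ κ) ∨
      (IsNormalSetIdeal Z I ∧ IsFineSetIdeal Z I ∧ #𝒜 ≤ #X)) :
    ∃ B : Set (Set X) → Set (Set X),
      (∀ A ∈ 𝒜, B A ⊆ Z) ∧
      (∀ A ∈ 𝒜, (A \ B A) ∪ (B A \ A) ∈ I) ∧
      (∀ A ∈ 𝒜, ∀ A' ∈ 𝒜, A ≠ A' → B A ∩ B A' = ∅) := by
  have hpair : Pairwise fun A A' : 𝒜 ↦ (A : Set (Set X)) ∩ A' ∈ I :=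
    fun A A' hne ↦ hanti A A.2 A' A'.2 (Subtype.coe_ne_coe.2 hne)
  obtain ⟨D, hD⟩ : ∃ D, IsDisjointShrinking I ((↑) : 𝒜 → Set (Set X)) D := by
    rcases hcase with ⟨hcomp, hcard⟩ | ⟨hnorm, hfine, hcard⟩
    · exact IsCompleteSetIdeal.exists_isDisjointShrinking hcomp hcard hpair
    · obtain ⟨g⟩ := (le_def _ _).1 hcard
      exact IsNormalSetIdeal.exists_isDisjointShrinking hideal hnorm hfine
        (fun A ↦ (hpos A A.2).1) hpair g.injective
  obtain ⟨B, hBA, hdiff, hdisj⟩ := hD.exists_disjoint_representatives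
  exact ⟨B, fun A hA ↦ (hBA A hA).trans (hpos A hA).1, hdiff, hdisj⟩
end

section
/- Let P be a partial order and μ a cardinal such that every strictly descending chain in P of length less than μ has an infimum (a greatest lower bound). Then every downward-directed subset of P of cardinality less than μ has an infimum. -/
/-!
Iwamura's argument, by induction on `#D`. A finite nonempty directed set has a least element,
and the empty set has the infimum of the empty chain. If `D` is infinite, enumerate it along
the initial ordinal of `#D` and choose lower bounds `b s` of the finite subsets `s` of `D`
antitonely in `s`. The values of `b` on the finite subsets of the `i`-th initial segment form a
directed set `S i` with `#(S i) < #D`, which has an infimum `m i` by induction. Then `i ↦ m i` is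
antitone, so once repetitions are removed its range is a strictly descending well-ordered chain
of length at most `#D < μ`, and the infimum of this chain is the infimum of `D`.
-/

open Cardinal Set

universe u

def DescendingChainsHaveGLB (P : Type u) [Preorder P] (μ : Cardinal.{u}) : Prop :=
  ∀ β : Ordinal.{u}, β.card < μ → ∀ f : β.ToType → P, StrictAnti f → ∃ m, IsGLB (Set.range f) m

namespace DescendingChainsHaveGLB

variable {P : Type u} {μ : Cardinal.{u}} {ι : Type u} [LinearOrder ι] [WellFoundedLT ι]

theorem exists_isGLB_range_of_strictAnti [Preorder P] (h : DescendingChainsHaveGLB P μ)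
    {f : ι → P} (hf : StrictAnti f) (hι : #ι < μ) : ∃ m, IsGLB (range f) m := by
  obtain ⟨g⟩ := Ordinal.type_eq.1 (Ordinal.type_toType (Ordinal.type (α := ι) (· < ·)))
  have hg : StrictMono g := (OrderIso.ofRelIsoLT g).strictMono
  obtain ⟨m, hm⟩ := h _ (by rwa [Ordinal.card_type]) (f ∘ g) (hf.comp_strictMono hg)
  exact ⟨m, by rwa [range_comp, g.surjective.range_eq, image_univ] at hm⟩

theorem exists_isGLB_range_of_antitone [PartialOrder P] (h : DescendingChainsHaveGLB P μ)
    {c : ι → P} (hc : Antitone c) (hι : #ι < μ) : ∃ m, IsGLB (range c) m := by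
  obtain ⟨u, hu, hinj⟩ := exists_image_eq_and_injOn univ c
  have hanti : StrictAnti (u.domRestrict c) :=
    (hc.comp_monotone (Subtype.mono_coe _)).strictAnti_of_injective hinj.injective
  obtain ⟨m, hm⟩ := h.exists_isGLB_range_of_strictAnti hanti ((mk_set_le u).trans_lt hι)
  exact ⟨m, by rwa [range_domRestrict, hu, image_univ] at hm⟩

end DescendingChainsHaveGLB

theorem Cardinal.mk_finset_lt {α : Type u} {κ : Cardinal.{u}} (hκ : ℵ₀ ≤ κ) (hα : #α < κ) :
    #(Finset α) < κ := by
  cases finite_or_infinite α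
  · exact (lt_aleph0_of_finite _).trans_le hκ
  · rwa [mk_finset_of_infinite]

theorem Cardinal.mk_finset_subset_le {α : Type u} (s : Set α) :
    #{t : Finset α | ↑t ⊆ s} ≤ #(Finset s) := by
  classical
  refine mk_le_of_injective (f := fun t => t.1.subtype (· ∈ s)) fun t t' htt' => ?_
  rw [Subtype.ext_iff, ← Finset.subtype_map_of_mem t.2, ← Finset.subtype_map_of_mem t'.2]
  exact congrArg (Finset.map _) htt'

theorem exists_antitone_finset_forall_le {ι α : Type*} [Preorder α] [Nonempty α]
    [IsCodirectedOrder α] (f : ι → α) :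
    ∃ b : Finset ι → α, Antitone b ∧ ∀ s, ∀ i ∈ s, b s ≤ f i := by
  classical
  have step (s : Finset ι) (rec : ∀ t ⊂ s, α) :
      ∃ z, (∀ i ∈ s, z ≤ f i) ∧ ∀ t (h : t ⊂ s), z ≤ rec t h := by
    obtain ⟨z, hz⟩ := directed_id.finset_le (r := (· ≥ ·)) <|
      s.image f ∪ s.ssubsets.attach.image fun t : s.ssubsets => rec t (Finset.mem_ssubsets.1 t.2)
    refine ⟨z, fun i hi => hz _ ?_, fun t ht => hz _ ?_⟩
    · exact Finset.mem_union_left _ (Finset.mem_image_of_mem f hi)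
    · exact Finset.mem_union_right _
        (Finset.mem_image_of_mem _ (Finset.mem_attach _ ⟨t, Finset.mem_ssubsets.2 ht⟩))
  choose z hz using step
  let b : Finset ι → α := Finset.strongInduction z
  have hb (s : Finset ι) : b s = z s fun t _ => b t := Finset.strongInduction_eq z s
  refine ⟨b, fun t s hts => ?_, fun s i hi => hb s ▸ (hz s _).1 i hi⟩
  rcases hts.eq_or_ssubset with rfl | hts
  · rfl
  · exact hb s ▸ (hz s _).2 t hts

theorem DirectedOn.exists_isLeast_of_finite {P : Type*} [Preorder P] {D : Set P}
    (hD : DirectedOn (· ≥ ·) D) (hfin : D.Finite) (hne : D.Nonempty) : ∃ m, IsLeast D m := by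
  have := hD.isCodirectedOrder
  have := hfin.to_subtype
  have := hne.to_subtype
  obtain ⟨m, hm⟩ := Finite.exists_ge (id : D → D)
  exact ⟨m, m.2, fun x hx => hm ⟨x, hx⟩⟩

theorem isGLB_of_isGLB_range_of_isGLB {P ι : Type*} [Preorder P] {D : Set P} {S : ι → Set P}
    {m : ι → P} {a : P} (hSD : ∀ i, S i ⊆ D) (hDS : ∀ d ∈ D, ∃ i, ∃ x ∈ S i, x ≤ d)
    (hm : ∀ i, IsGLB (S i) (m i)) (ha : IsGLB (range m) a) : IsGLB D a := by
  refine ⟨fun d hd => ?_, fun l hl => ha.2 (forall_mem_range.2 fun i => (hm i).2 ?_)⟩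
  · obtain ⟨i, x, hx, hxd⟩ := hDS d hd
    exact (ha.1 (mem_range_self i)).trans (((hm i).1 hx).trans hxd)
  · exact fun x hx => hl (hSD i hx)

theorem DescendingChainsHaveGLB.exists_isGLB_of_aleph0_le {P : Type u} [PartialOrder P]
    {μ : Cardinal.{u}} (h : DescendingChainsHaveGLB P μ) {D : Set P}
    (hD : DirectedOn (· ≥ ·) D) (hD₀ : ℵ₀ ≤ #D) (hDμ : #D < μ)
    (ih : ∀ S : Set P, DirectedOn (· ≥ ·) S → #S < #D → ∃ m, IsGLB S m) :
    ∃ m, IsGLB D m := by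
  classical
  have := hD.isCodirectedOrder
  have : Nonempty D := mk_ne_zero_iff.1 (aleph0_pos.trans_le hD₀).ne'
  let ι := (#D).ord.ToType
  have hord : (#ι).ord = Ordinal.type (α := ι) (· < ·) := by simp [ι]
  have hι : #ι = #D := by simp [ι]
  obtain ⟨e⟩ := Cardinal.eq.1 hι
  obtain ⟨b, hb_anti, hb_le⟩ := exists_antitone_finset_forall_le e
  let S (i : ι) : Set P := (fun s => (b s : P)) '' {s | ↑s ⊆ Iic i}
  have hS_dir (i : ι) : DirectedOn (· ≥ ·) (S i) := by
    rintro _ ⟨s, hs, rfl⟩ _ ⟨t, ht, rfl⟩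
    refine ⟨_, ⟨s ∪ t, ?_, rfl⟩, hb_anti Finset.subset_union_left,
      hb_anti Finset.subset_union_right⟩
    exact (Finset.coe_union s t).trans_subset (union_subset hs ht)
  have hS_card (i : ι) : #(S i) < #D :=
    mk_image_le.trans_lt <| (mk_finset_subset_le _).trans_lt <|
      mk_finset_lt hD₀ ((mk_Iic_lt i hord (hD₀.trans_eq hι.symm)).trans_eq hι)
  choose m hm using fun i => ih (S i) (hS_dir i) (hS_card i)
  have hm_anti : Antitone m := fun i j hij =>
    (hm i).mono (hm j) (image_mono fun s hs => hs.trans (Iic_subset_Iic.2 hij))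
  obtain ⟨a, ha⟩ := h.exists_isGLB_range_of_antitone hm_anti (hι ▸ hDμ)
  refine ⟨a, isGLB_of_isGLB_range_of_isGLB (S := S) ?_ (fun d hd => ?_) hm ha⟩
  · rintro i _ ⟨s, -, rfl⟩
    exact (b s).2
  · refine ⟨e.symm ⟨d, hd⟩, b {e.symm ⟨d, hd⟩}, ⟨_, by simp, rfl⟩, ?_⟩
    have := hb_le {e.symm ⟨d, hd⟩} _ (Finset.mem_singleton_self _)
    rw [Equiv.apply_symm_apply] at this
    exact this

/-- If every strictly descending chain in a partial order `P` of length less than the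
cardinal `μ` has an infimum (greatest lower bound), then every downward-directed
subset of `P` of cardinality less than `μ` has an infimum. -/
theorem directed_has_infimum_of_chains_have_infimum {P : Type u} [PartialOrder P]
    (μ : Cardinal.{u})
    (hchains : ∀ β : Ordinal.{u}, β.card < μ → ∀ f : β.ToType → P, StrictAnti f →
      ∃ m, IsGLB (Set.range f) m) :
    ∀ D : Set P, DirectedOn (· ≥ ·) D → #D < μ → ∃ m, IsGLB D m := by
  intro D
  induction D using (InvImage.wf (fun D : Set P => #D) wellFounded_lt).induction with
  | _ D ih => ?_
  intro hD hDμ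
  obtain rfl | hne := D.eq_empty_or_nonempty
  · obtain ⟨m, hm⟩ := hchains 0 (by simpa using hDμ) isEmptyElim isEmptyElim
    exact ⟨m, by rwa [range_eq_empty] at hm⟩
  rcases lt_or_ge #D ℵ₀ with hfin | hinf
  · obtain ⟨m, hm⟩ := hD.exists_isLeast_of_finite (lt_aleph0_iff_set_finite.1 hfin) hne
    exact ⟨m, hm.isGLB⟩
  · exact DescendingChainsHaveGLB.exists_isGLB_of_aleph0_le hchains hD hinf hDμ
      fun S hS hSD => ih S hSD hS (hSD.trans hDμ)
end

section
/- Let B be a complete Boolean algebra and κ an infinite cardinal with |B| ≤ 2^κ. Then there is a surjective Boolean algebra homomorphism h from the powerset algebra 𝒫(κ) onto B such that h(x) = ⊥ for every bounded subset x of κ; consequently, there is an ideal I on κ containing all bounded subsets of κ with 𝒫(κ)/I ≅ B. -/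
/-!
Read a pair `(a, b)` as the constraint `b ≤ h a` on a Boolean homomorphism `h`. If a set of
constraints is closed under `⊓`, contains `(⊤, ⊤)` and forces nothing nonzero below `⊥`, then so
is its enlargement by `(x, (forced xᶜ)ᶜ)`. Hence a maximal such set (Zorn) decides every `x`, and
`x ↦ ⨆ {b | (a, b) is a constraint with a ≤ x}` is a homomorphism into the complete algebra `B`
(Sikorski's extension theorem).

Hausdorff's construction gives subsets `A b` (`b ∈ B`) of `κ` all of whose nontrivial Boolean
combinations have size `κ`, hence are unbounded. The constraints
`⋀_{b ∈ F} b ⊓ ⋀_{b ∈ G} bᶜ ≤ h (⋂_{b ∈ F} A b ∩ ⋂_{b ∈ G} (A b)ᶜ ∩ N)`, with `N` co-bounded, are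
then admissible, and they force `h (A b) = b` and `h N = ⊤`.
-/

open Cardinal Set
open scoped SetFamily Ordinal

universe u

section BoolComb

variable {X ι : Type*} [BooleanAlgebra X] (f : ι → X) (F G F' G' : Finset ι)

def boolComb : X := F.inf f ⊓ G.inf fun i => (f i)ᶜ

theorem boolComb_union [DecidableEq ι] :
    boolComb f (F ∪ F') (G ∪ G') = boolComb f F G ⊓ boolComb f F' G' := by
  simp only [boolComb, Finset.inf_union]
  exact inf_inf_inf_comm _ _ _ _

variable {F G} in
theorem boolComb_eq_bot_of_not_disjoint (h : ¬Disjoint F G) : boolComb f F G = ⊥ := by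
  obtain ⟨i, hiF, hiG⟩ := Finset.not_disjoint_iff.1 h
  exact le_bot_iff.1 <| (inf_le_inf (Finset.inf_le hiF) (Finset.inf_le hiG)).trans
    (inf_compl_eq_bot (a := f i)).le

theorem mem_boolComb {α : Type*} (A : ι → Set α) (z : α) :
    z ∈ boolComb A F G ↔ (∀ i ∈ F, z ∈ A i) ∧ ∀ i ∈ G, z ∉ A i := by
  simp [boolComb, Finset.inf_eq_iInf]

end BoolComb

namespace Sikorski

variable {A B : Type*} [BooleanAlgebra A] [CompleteBooleanAlgebra B]

/-- `(a, b) ∈ S` stands for the constraint `b ≤ h a` on a homomorphism `h : A → B`, and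
`forced S x` is the best lower bound on `h x` that they imply. -/
structure Admissible (S : Set (A × B)) : Prop where
  infClosed : InfClosed S
  top_mem : ⊤ ∈ S
  eq_bot_of_bot_mem : ∀ b, (⊥, b) ∈ S → b = ⊥

def forced (S : Set (A × B)) (x : A) : B := sSup {b | ∃ a ≤ x, (a, b) ∈ S}

variable {S : Set (A × B)} {a x y : A} {b : B}

theorem le_forced (h : (a, b) ∈ S) (hax : a ≤ x) : b ≤ forced S x :=
  le_sSup ⟨a, hax, h⟩

theorem forced_mono : Monotone (forced (A := A) (B := B) S) :=
  fun _ _ hxy => sSup_le_sSup fun _ ⟨a, hax, h⟩ => ⟨a, hax.trans hxy, h⟩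

namespace Admissible

theorem inf_forced_le (hS : Admissible S) : forced S x ⊓ forced S y ≤ forced S (x ⊓ y) := by
  rw [forced, forced, sSup_inf_sSup]
  refine iSup₂_le fun _ ⟨⟨a, hax, hab⟩, ⟨a', hay, hac⟩⟩ => ?_
  exact le_forced (hS.infClosed hab hac) (inf_le_inf hax hay)

theorem forced_inf (hS : Admissible S) (x y : A) :
    forced S (x ⊓ y) = forced S x ⊓ forced S y :=
  le_antisymm (le_inf (forced_mono inf_le_left) (forced_mono inf_le_right)) hS.inf_forced_le

theorem forced_bot (hS : Admissible S) : forced S (⊥ : A) = ⊥ :=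
  le_bot_iff.1 <| sSup_le fun c ⟨_, ha, hac⟩ =>
    (hS.eq_bot_of_bot_mem c (le_bot_iff.1 ha ▸ hac)).le

theorem inf_forced_compl (hS : Admissible S) (x : A) : forced S x ⊓ forced S xᶜ = ⊥ :=
  le_bot_iff.1 <| hS.inf_forced_le.trans (by rw [inf_compl_eq_bot, hS.forced_bot])

theorem infs_insert_top (hS : Admissible S) (x : A) :
    Admissible (S ⊼ {⊤, (x, (forced S xᶜ)ᶜ)}) where
  infClosed := by
    rintro _ ⟨p, hp, t, ht, rfl⟩ _ ⟨p', hp', t', ht', rfl⟩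
    refine ⟨p ⊓ p', hS.infClosed hp hp', t ⊓ t', ?_, inf_inf_inf_comm _ _ _ _⟩
    rcases ht with rfl | rfl <;> rcases ht' with rfl | rfl <;> simp
  top_mem := ⟨⊤, hS.top_mem, ⊤, by simp, top_inf_eq _⟩
  eq_bot_of_bot_mem := by
    rintro c ⟨⟨a, b⟩, hab, t, ht | ht, he⟩ <;> subst ht <;>
      simp only [Prod.mk_inf_mk, Prod.mk.injEq, inf_top_eq] at he <;> obtain ⟨ha, rfl⟩ := he
    · exact hS.eq_bot_of_bot_mem _ (ha ▸ hab)
    · have : b ≤ forced S xᶜ := le_forced hab (disjoint_iff.2 ha).le_compl_right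
      exact le_bot_iff.1 <| (inf_le_inf_right _ this).trans inf_compl_eq_bot.le

theorem sUnion_of_isChain {C : Set (Set (A × B))} (hC : ∀ S ∈ C, Admissible S)
    (hchain : IsChain (· ⊆ ·) C) (hne : C.Nonempty) : Admissible (⋃₀ C) where
  infClosed := by
    rintro p ⟨S, hSC, hp⟩ q ⟨T, hTC, hq⟩
    obtain ⟨U, hUC, hSU, hTU⟩ := hchain.directedOn S hSC T hTC
    exact ⟨U, hUC, (hC U hUC).infClosed (hSU hp) (hTU hq)⟩
  top_mem := hne.elim fun S hS => ⟨S, hS, (hC S hS).top_mem⟩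
  eq_bot_of_bot_mem := fun _ ⟨S, hSC, h⟩ => (hC S hSC).eq_bot_of_bot_mem _ h

theorem exists_maximal (hS : Admissible S) : ∃ T, S ⊆ T ∧ Maximal Admissible T :=
  zorn_subset_nonempty {T | Admissible T}
    (fun C hC hchain hne => ⟨⋃₀ C, sUnion_of_isChain hC hchain hne, fun _ => subset_sUnion_of_mem⟩)
    S hS

end Admissible

theorem forced_compl_of_maximal (hS : Maximal Admissible S) (x : A) :
    forced S xᶜ = (forced S x)ᶜ := by
  have hsub : S ⊆ S ⊼ {⊤, (x, (forced S xᶜ)ᶜ)} := fun p hp => ⟨p, hp, ⊤, by simp, inf_top_eq _⟩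
  have hmem : (x, (forced S xᶜ)ᶜ) ∈ S :=
    (hS.eq_of_superset (hS.prop.infs_insert_top x) hsub).subset
      ⟨⊤, hS.prop.top_mem, _, by simp, top_inf_eq _⟩
  refine (IsCompl.compl_eq ⟨disjoint_iff.2 (hS.prop.inf_forced_compl x), ?_⟩).symm
  exact codisjoint_iff_compl_le_left.2 (le_forced hmem le_rfl)

def homOfMaximal (hS : Maximal Admissible S) : BoundedLatticeHom A B where
  toFun := forced S
  map_inf' := hS.prop.forced_inf
  map_sup' x y := by
    rw [← compl_compl (x ⊔ y), forced_compl_of_maximal hS, compl_sup, hS.prop.forced_inf,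
      forced_compl_of_maximal hS, forced_compl_of_maximal hS, ← compl_sup, compl_compl]
  map_top' := top_le_iff.1 (le_forced hS.prop.top_mem le_rfl)
  map_bot' := hS.prop.forced_bot

theorem Admissible.exists_boundedLatticeHom (hS : Admissible S) :
    ∃ h : BoundedLatticeHom A B, ∀ p ∈ S, p.2 ≤ h p.1 := by
  obtain ⟨T, hST, hT⟩ := hS.exists_maximal
  exact ⟨homOfMaximal hT, fun p hp => le_forced (hST hp) le_rfl⟩

end Sikorski

section Independent

variable {α ι B : Type*} [CompleteBooleanAlgebra B] (l : Filter α) (A : ι → Set α) (v : ι → B)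

def boolCombConstraints : Set (Set α × B) :=
  {p | ∃ F G : Finset ι, ∃ N ∈ l, p = (boolComb A F G ⊓ N, boolComb v F G)}

theorem admissible_boolCombConstraints
    (hA : ∀ F G : Finset ι, Disjoint F G → ∃ᶠ z in l, z ∈ boolComb A F G) :
    Sikorski.Admissible (boolCombConstraints l A v) where
  infClosed := by
    classical
    rintro _ ⟨F, G, N, hN, rfl⟩ _ ⟨F', G', N', hN', rfl⟩
    refine ⟨F ∪ F', G ∪ G', N ∩ N', Filter.inter_mem hN hN', ?_⟩
    rw [boolComb_union, boolComb_union, Prod.mk_inf_mk, inf_inf_inf_comm]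
    rfl
  top_mem := ⟨∅, ∅, univ, Filter.univ_mem, by ext <;> simp [boolComb]⟩
  eq_bot_of_bot_mem := by
    rintro _ ⟨F, G, N, hN, he⟩
    obtain ⟨hempty, rfl⟩ := Prod.mk.inj he
    refine boolComb_eq_bot_of_not_disjoint v fun hFG => ?_
    obtain ⟨z, hzN, hz⟩ := Filter.frequently_iff.1 (hA F G hFG) hN
    exact eq_empty_iff_forall_notMem.1 hempty.symm z ⟨hz, hzN⟩

theorem exists_boundedLatticeHom_of_frequently_boolComb
    (hA : ∀ F G : Finset ι, Disjoint F G → ∃ᶠ z in l, z ∈ boolComb A F G) :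
    ∃ h : BoundedLatticeHom (Set α) B, (∀ i, h (A i) = v i) ∧ ∀ N ∈ l, h N = ⊤ := by
  obtain ⟨h, hh⟩ := (admissible_boolCombConstraints l A v hA).exists_boundedLatticeHom
  have hle : ∀ F G, boolComb v F G ≤ h (boolComb A F G) := fun F G => by
    simpa using hh _ ⟨F, G, univ, Filter.univ_mem, rfl⟩
  refine ⟨h, fun i => le_antisymm ?_ (by simpa [boolComb] using hle {i} ∅), fun N hN => ?_⟩
  · simpa [boolComb, map_compl] using hle ∅ {i}
  · simpa [boolComb] using hh _ ⟨∅, ∅, N, hN, rfl⟩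

end Independent

theorem Finset.exists_separating {α ι : Type*} (e : ι → Set α) (F G : Finset ι)
    (h : ∀ i ∈ F, ∀ j ∈ G, e i ≠ e j) :
    ∃ s : Finset α, ∀ i ∈ F, ∀ j ∈ G, ∃ w ∈ s, ¬(w ∈ e i ↔ w ∈ e j) := by
  classical
  have hw : ∀ p ∈ F ×ˢ G, ∃ w, ¬(w ∈ e p.1 ↔ w ∈ e p.2) := fun p hp => by
    simpa [Set.ext_iff] using h p.1 (Finset.mem_product.1 hp).1 p.2 (Finset.mem_product.1 hp).2
  refine ⟨(F ×ˢ G).attach.image fun p => (hw p.1 p.2).choose, fun i hi j hj => ?_⟩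
  have hp : (i, j) ∈ F ×ˢ G := Finset.mem_product.2 ⟨hi, hj⟩
  exact ⟨_, Finset.mem_image_of_mem _ (Finset.mem_attach _ ⟨(i, j), hp⟩), (hw _ hp).choose_spec⟩

theorem exists_independent_family {α ι : Type u} [Infinite α] (h : #ι ≤ 2 ^ #α) :
    ∃ A : ι → Set α, ∀ F G : Finset ι, Disjoint F G → #α ≤ #(boolComb A F G : Set α) := by
  classical
  obtain ⟨e⟩ : Nonempty (ι ↪ Set α) := (le_def _ _).1 (by rwa [mk_set])
  obtain ⟨g⟩ : Nonempty (α ≃ α × Finset α × Finset (Finset α)) :=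
    Cardinal.eq.1 (by simp [mk_finset_of_infinite, mul_eq_self (aleph0_le_mk α)])
  -- `g z` codes a point `y`, a finite set `s` and a family `T` of subsets of `s`, and `z ∈ A i`
  -- iff the trace of `e i` on `s` lies in `T`; the free coordinate `y` makes every nontrivial
  -- Boolean combination as large as `α`.
  let A i : Set α := {z | (g z).2.1.filter (· ∈ e i) ∈ (g z).2.2}
  refine ⟨A, fun F G hFG => ?_⟩
  obtain ⟨s, hs⟩ := Finset.exists_separating e F G fun i hi j hj hij =>
    Finset.disjoint_left.1 hFG hi (e.injective hij ▸ hj)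
  let code (y : α) : α := g.symm (y, s, F.image fun i => s.filter (· ∈ e i))
  have hcode : ∀ y, code y ∈ boolComb A F G := fun y => by
    simp only [mem_boolComb, A, code, mem_ofPred_eq, Equiv.apply_symm_apply, Finset.mem_image]
    refine ⟨fun i hi => ⟨i, hi, rfl⟩, fun j hj ⟨i, hi, hij⟩ => ?_⟩
    obtain ⟨w, hws, hw⟩ := hs i hi j hj
    exact hw (by simpa [hws] using Finset.ext_iff.1 hij w)
  exact mk_le_of_injective (f := fun y => ⟨code y, hcode y⟩) fun y y' hy => by
    simpa [code] using congrArg Subtype.val hy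

theorem Filter.frequently_atTop_of_mk_le {α : Type u} [LinearOrder α] [WellFoundedLT α]
    [Nonempty α] (hα : (#α).ord = typeLT α) {C : Set α} (hC : #α ≤ #C) :
    ∃ᶠ z in Filter.atTop, z ∈ C := by
  rw [Filter.frequently_atTop]
  by_contra! h
  obtain ⟨a, ha⟩ := h
  have hCa : C ⊆ Iio a := fun z hz => lt_of_not_ge fun haz => ha z haz hz
  exact (hC.trans (mk_le_mk_of_subset hCa)).not_gt (mk_Iio_lt a hα)

/-- Let `B` be a complete Boolean algebra and `κ` an infinite cardinal with
`|B| ≤ 2^κ`.  Then there is a surjective Boolean algebra homomorphism `h` from the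
powerset algebra `𝒫(κ)` (here `Set κ.ord.toType`) onto `B` sending every bounded
subset of `κ` to `⊥`.  (Its kernel is then a uniform ideal `I` on `κ` containing all
bounded sets, with `𝒫(κ)/I ≅ B`.) -/
theorem exists_surjective_hom_powerset_onto_complete_boolean_algebra
    {B : Type u} [CompleteBooleanAlgebra B] (κ : Cardinal.{u}) (hκ : ℵ₀ ≤ κ)
    (hB : #B ≤ 2 ^ κ) :
    ∃ h : BoundedLatticeHom (Set κ.ord.ToType) B,
      Function.Surjective h ∧
      ∀ x : Set κ.ord.ToType, BddAbove x → h x = ⊥ := by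
  have hα : #κ.ord.ToType = κ := mk_ord_toType κ
  have : Infinite κ.ord.ToType := infinite_iff.2 (by rwa [hα])
  have : NoMaxOrder κ.ord.ToType := Cardinal.noMaxOrder hκ
  obtain ⟨A, hA⟩ := exists_independent_family (ι := B) (α := κ.ord.ToType) (by rwa [hα])
  obtain ⟨h, hAh, htop⟩ := exists_boundedLatticeHom_of_frequently_boolComb Filter.atTop A id
    fun F G hFG => Filter.frequently_atTop_of_mk_le (by simp) (hA F G hFG)
  refine ⟨h, fun b => ⟨A b, hAh b⟩, fun x ⟨a, ha⟩ => ?_⟩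
  have hx : xᶜ ∈ Filter.atTop :=
    Filter.mem_of_superset (Filter.Ioi_mem_atTop a) fun z hz hzx => (ha hzx).not_gt hz
  rw [← compl_compl x, map_compl, htop _ hx, compl_top]
end

section
/- For every cardinal α there exists a regular cardinal λ ≥ α such that 2^{<λ} < 2^λ, where 2^{<λ} = sup{2^μ : μ < λ}. Equivalently, there is no cardinal α such that 2^{<λ} = 2^λ for all regular λ ≥ α; i.e., the regular cardinals λ with 2^{<λ} < 2^λ form a proper class. -/
/-!
Take `δ` least with `2 ^ μ < 2 ^ δ`, where `μ = max α ℵ₀`. Minimality gives `2 ^< δ ≤ 2 ^ μ`.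
If `δ` were singular, writing it as a sum of `cf δ` smaller cardinals would give
`2 ^ δ ≤ (2 ^< δ) ^ cf δ ≤ 2 ^ (μ * cf δ) ≤ 2 ^ μ`, because `μ * cf δ < δ`.
-/

open Cardinal Set

universe u

namespace Cardinal

theorem power_le_powerlt_pow_cof_ord (a : Cardinal.{u}) {c : Cardinal.{u}} (hc : ℵ₀ ≤ c) :
    a ^ c ≤ (a ^< c) ^ c.ord.cof := by
  rcases eq_or_ne a 0 with rfl | ha
  · rw [zero_power (aleph0_pos.trans_le hc).ne']
    exact zero_le
  induction c using Cardinal.inductionOn with | mk α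
  obtain ⟨_, _, hα⟩ := exists_ord_eq_type_lt α
  have : NoMaxOrder α := by
    rw [← Ordinal.isSuccPrelimit_type_lt_iff, ← hα]
    exact (isSuccLimit_ord hc).isSuccPrelimit
  obtain ⟨s, hs, hs'⟩ := Order.exists_cof_eq α
  have hα_le : #α ≤ sum fun i : s ↦ #(Iio i.1) := by
    rw [← mk_univ, ← isCofinal_iff_iUnion_Iio_eq_univ.1 hs, biUnion_eq_iUnion]
    exact mk_iUnion_le_sum_mk
  calc a ^ #α ≤ a ^ sum fun i : s ↦ #(Iio i.1) := power_le_power_left ha hα_le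
    _ = prod fun i : s ↦ a ^ #(Iio i.1) := power_sum a _
    _ ≤ prod fun _ : s ↦ a ^< #α :=
      prod_le_prod _ _ fun i ↦ le_powerlt a (mk_Iio_lt i.1 hα)
    _ = (a ^< #α) ^ (#α).ord.cof := by
      rw [prod_const', hs', hα, Ordinal.cof_type]

theorem isRegular_of_powerlt_le_power_lt_power {a μ δ : Cardinal.{u}} (hδ : ℵ₀ ≤ δ)
    (hμδ : μ < δ) (hle : a ^< δ ≤ a ^ μ) (hlt : a ^ μ < a ^ δ) : δ.IsRegular := by
  refine ⟨hδ, le_of_not_gt fun hcof ↦ hlt.not_ge ?_⟩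
  calc a ^ δ ≤ (a ^< δ) ^ δ.ord.cof := power_le_powerlt_pow_cof_ord a hδ
    _ ≤ (a ^ μ) ^ δ.ord.cof := power_le_power_right hle
    _ = a ^ (μ * δ.ord.cof) := power_mul.symm
    _ ≤ a ^< δ := le_powerlt a (mul_lt_of_lt hδ hμδ hcof)
    _ ≤ a ^ μ := hle

theorem exists_powerlt_le_power_lt_power {a : Cardinal.{u}} (ha : 1 < a) (μ : Cardinal.{u}) :
    ∃ δ, μ < δ ∧ a ^< δ ≤ a ^ μ ∧ a ^ μ < a ^ δ := by
  set S := {c : Cardinal.{u} | a ^ μ < a ^ c}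
  have hS : S.Nonempty := ⟨a ^ μ, cantor' _ ha⟩
  have hlt : a ^ μ < a ^ sInf S := csInf_mem hS
  refine ⟨sInf S, ?_, powerlt_le.2 fun x hx ↦ ?_, hlt⟩
  · exact lt_of_not_ge fun h ↦ hlt.not_ge (power_le_power_left (zero_lt_one.trans ha).ne' h)
  · exact le_of_not_gt fun h ↦ hx.not_ge (csInf_le (OrderBot.bddBelow S) h)

end Cardinal

/-- For every cardinal `α` there is a regular cardinal `λ ≥ α` with
`2^{<λ} < 2^λ` (where `2^{<λ} = sup {2^μ : μ < λ}`); i.e. the regular cardinals at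
which the continuum function "jumps" form a proper class. -/
theorem exists_regular_powerlt_lt_power (α : Cardinal.{u}) :
    ∃ lam : Cardinal.{u}, α ≤ lam ∧ lam.IsRegular ∧ (2 : Cardinal.{u}) ^< lam < 2 ^ lam := by
  obtain ⟨δ, hμδ, hle, hlt⟩ := exists_powerlt_le_power_lt_power one_lt_two (max α ℵ₀)
  refine ⟨δ, le_max_left _ _ |>.trans hμδ.le, ?_, hle.trans_lt hlt⟩
  exact isRegular_of_powerlt_le_power_lt_power ((le_max_right _ _).trans hμδ.le) hμδ hle hlt
end
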